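/- Let μ be a probability distribution on [0,1]^d whose one-dimensional marginals have densities bounded by M. There is a universal constant C such that for every c ≥ 1 and every δ > 0 there exists a ReLU network N : ℝ^d → ℝ^{c·d} of size at most C·d·c² such that Pr_{x∼μ}[N(x) = bin_c(x)] ≥ 1 − δ. -/

import Mathlib

open MeasureTheory
open scoped ENNReal

noncomputable section

/-- The ReLU activation. -/
def relu (t : ℝ) : ℝ := max 0 t

/-- A feedforward neural network from `ℝ^n` to `ℝ^q`, given as a sequence of affine
layers; the activation is applied coordinatewise after every affine layer except the
last one. -/
inductive Net : ℕ → ℕ → Type where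
  | last {n q : ℕ} (A : Fin q → Fin n → ℝ) (b : Fin q → ℝ) : Net n q
  | layer {n m q : ℕ} (A : Fin m → Fin n → ℝ) (b : Fin m → ℝ) (rest : Net m q) : Net n q

/-- Evaluation of a network with activation `σ`. -/
def Net.eval (σ : ℝ → ℝ) : {n q : ℕ} → Net n q → (Fin n → ℝ) → Fin q → ℝ
  | _, _, .last A b, x, i => (∑ j, A i j * x j) + b i
  | _, _, .layer A b rest, x, i => rest.eval σ (fun m => σ ((∑ j, A m j * x j) + b m)) i

/-- The size of a network: the total number of neurons. -/
def Net.size : {n q : ℕ} → Net n q → ℕ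
  | _, q, .last _ _ => q
  | _, _, .layer (m := m) _ _ rest => m + rest.size

/-- The `j`-th bit (as a real number) of the `c`-bit binary representation of
`min(⌊2^c t⌋, 2^c − 1)`. -/
def bitRep (c : ℕ) (t : ℝ) (j : Fin c) : ℝ :=
  if (min (⌊(2:ℝ) ^ c * t⌋.toNat) (2 ^ c - 1)).testBit j then 1 else 0

/-- `bin_c(x) ∈ {0,1}^{c·d}`: the concatenation over `i = 1,…,d` of the `c`-bit binary
representations of the integers `min(⌊2^c x_i⌋, 2^c − 1)`. -/
def binc (c d : ℕ) (x : Fin d → ℝ) : Fin (c * d) → ℝ :=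
  fun p => bitRep c (x (finProdFinEquiv.symm p).2) (finProdFinEquiv.symm p).1

/-!
Each coordinate `t` is run through the doubling map `t ↦ 2t - digit t`, whose successive
leading digits are the binary digits of `⌊2^c t⌋`, most significant first. The digit
`1[t ≥ 1/2]` is computed exactly by a difference of two ReLUs ramping from `0` to `1` on
`[1/2 - ε, 1/2 + ε]`, and the `k`-th iterate is `ε`-close to `1/2` only if `t` is `ε`-close to a
dyadic rational `ℓ / 2^c`. So `c` stages of width `O(c)` per coordinate compute `bin_c` off a
set of coordinates of total length `(2^c + 1) 2ε`, which by the marginal bound has probability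
at most `d M (2^c + 1) 2ε ≤ δ` for small `ε`.
-/
open Matrix

theorem relu_of_nonneg {t : ℝ} (ht : 0 ≤ t) : relu t = t := max_eq_right ht

namespace Net

variable {σ : ℝ → ℝ}

@[simp]
theorem eval_last {n q : ℕ} (A : Fin q → Fin n → ℝ) (b : Fin q → ℝ)
    (x : Fin n → ℝ) : (Net.last A b).eval σ x = A *ᵥ x + b :=
  rfl

@[simp]
theorem eval_layer {n m q : ℕ} (A : Fin m → Fin n → ℝ) (b : Fin m → ℝ) (rest : Net m q)
    (x : Fin n → ℝ) :
    (Net.layer A b rest).eval σ x = rest.eval σ (fun i => σ ((A *ᵥ x) i + b i)) :=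
  rfl

/-- Serial composition, with the activation applied between the two networks. -/
def comp : {n m q : ℕ} → Net n m → Net m q → Net n q
  | _, _, _, .last A b, N => .layer A b N
  | _, _, _, .layer A b rest, N => .layer A b (rest.comp N)

theorem eval_comp {n m q : ℕ} (N₁ : Net n m) (N₂ : Net m q) (x : Fin n → ℝ) :
    (N₁.comp N₂).eval σ x = N₂.eval σ (fun i => σ (N₁.eval σ x i)) := by
  induction N₁ with
  | last A b => rfl
  | layer A b rest ih => exact ih _ _

theorem size_comp {n m q : ℕ} (N₁ : Net n m) (N₂ : Net m q) :
    (N₁.comp N₂).size = N₁.size + N₂.size := by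
  induction N₁ with
  | last A b => rfl
  | layer A b rest ih => simp only [comp, size, ih, Nat.add_assoc]

def blockRep {m n : ℕ} (d : ℕ) (A : Fin m → Fin n → ℝ) :
    Fin (m * d) → Fin (n * d) → ℝ :=
  reindex finProdFinEquiv finProdFinEquiv (blockDiagonal fun _ : Fin d => of A)

theorem blockRep_mulVec {m n d : ℕ} (A : Fin m → Fin n → ℝ) (x : Fin (n * d) → ℝ)
    (j : Fin m) (i : Fin d) :
    (blockRep d A *ᵥ x) (finProdFinEquiv (j, i)) =
      (A *ᵥ fun k => x (finProdFinEquiv (k, i))) j := by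
  rw [blockRep, reindex_apply, submatrix_mulVec_equiv]
  simp only [mulVec, dotProduct, Function.comp_apply, Equiv.symm_symm, Fintype.sum_prod_type]
  simp [blockDiagonal_apply']

def replicate (d : ℕ) : {n q : ℕ} → Net n q → Net (n * d) (q * d)
  | _, _, .last A b => .last (blockRep d A) (fun p => b (finProdFinEquiv.symm p).1)
  | _, _, .layer A b rest => .layer (blockRep d A) (fun p => b (finProdFinEquiv.symm p).1)
      (rest.replicate d)

theorem eval_replicate (d : ℕ) {n q : ℕ} (N : Net n q) (x : Fin (n * d) → ℝ)
    (j : Fin q) (i : Fin d) :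
    (N.replicate d).eval σ x (finProdFinEquiv (j, i)) =
      N.eval σ (fun k => x (finProdFinEquiv (k, i))) j := by
  induction N with
  | last A b => simp [replicate, blockRep_mulVec, -finProdFinEquiv_symm_apply]
  | layer A b rest ih => simp [replicate, ih, blockRep_mulVec, -finProdFinEquiv_symm_apply]

theorem size_replicate (d : ℕ) {n q : ℕ} (N : Net n q) :
    (N.replicate d).size = N.size * d := by
  induction N with
  | last A b => rfl
  | layer A b rest ih => simp only [replicate, size, ih, Nat.add_mul]

end Net

def digit (t : ℝ) : ℕ := if 1 / 2 ≤ t then 1 else 0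

def shift (t : ℝ) : ℝ := 2 * t - digit t

theorem digit_le_one (t : ℝ) : digit t ≤ 1 := by
  unfold digit; split_ifs <;> omega

theorem shift_mem_Ico {t : ℝ} (ht : t ∈ Set.Ico 0 1) : shift t ∈ Set.Ico 0 1 := by
  obtain ⟨h0, h1⟩ := ht
  unfold shift digit
  split_ifs <;> constructor <;> push_cast <;> linarith

theorem floor_two_pow_mul_lt {t : ℝ} (ht : t ∈ Set.Ico 0 1) (k : ℕ) :
    ⌊2 ^ k * t⌋₊ < 2 ^ k := by
  rw [Nat.floor_lt (by have := ht.1; positivity)]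
  push_cast
  nlinarith [ht.2, pow_pos (two_pos (α := ℝ)) k]

theorem floor_two_pow_succ_mul {t : ℝ} (ht : t ∈ Set.Ico 0 1) (k : ℕ) :
    ⌊2 ^ (k + 1) * t⌋₊ = 2 ^ k * digit t + ⌊2 ^ k * shift t⌋₊ := by
  have hsplit : (2 : ℝ) ^ (k + 1) * t = 2 ^ k * shift t + ((2 ^ k * digit t : ℕ) : ℝ) := by
    unfold shift; push_cast; ring
  rw [hsplit, Nat.floor_add_natCast (by have := (shift_mem_Ico ht).1; positivity), add_comm]

def dyadicNbhd (k : ℕ) (ε : ℝ) : Set ℝ :=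
  ⋃ ℓ ∈ Finset.range (2 ^ k + 1), Metric.ball ((ℓ : ℝ) / 2 ^ k) ε

theorem mem_dyadicNbhd {k : ℕ} {ε t : ℝ} :
    t ∈ dyadicNbhd k ε ↔ ∃ ℓ : ℕ, ℓ ≤ 2 ^ k ∧ |t - ℓ / 2 ^ k| < ε := by
  simp [dyadicNbhd, Real.dist_eq]

theorem le_abs_sub_half_of_notMem_dyadicNbhd {k : ℕ} {ε t : ℝ}
    (ht : t ∉ dyadicNbhd (k + 1) ε) : ε ≤ |t - 1 / 2| := by
  by_contra! h
  refine ht (mem_dyadicNbhd.2 ⟨2 ^ k, Nat.pow_le_pow_right two_pos k.le_succ, ?_⟩)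
  rwa [pow_succ, Nat.cast_pow, Nat.cast_ofNat, div_mul_cancel_left₀ (by positivity), ← one_div]

theorem shift_notMem_dyadicNbhd {k : ℕ} {ε t : ℝ} (ht : t ∉ dyadicNbhd (k + 1) ε) :
    shift t ∉ dyadicNbhd k ε := by
  rw [mem_dyadicNbhd]
  rintro ⟨ℓ, hℓ, hdist⟩
  refine ht (mem_dyadicNbhd.2 ⟨2 ^ k * digit t + ℓ, ?_, ?_⟩)
  · have := digit_le_one t
    rw [pow_succ]
    nlinarith
  · have hscale :
        t - ((2 ^ k * digit t + ℓ : ℕ) : ℝ) / 2 ^ (k + 1) = (shift t - ℓ / 2 ^ k) / 2 := by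
      unfold shift
      field_simp
      push_cast
      ring
    rw [hscale, abs_div, abs_two]
    linarith [abs_nonneg (shift t - ℓ / 2 ^ k)]

theorem relu_sub_relu_eq_digit {ε t : ℝ} (hε : 0 ≤ ε) (ht : ε ≤ |t - 1 / 2|) :
    relu (t + (ε - 1 / 2)) - relu (t + (-ε - 1 / 2)) = 2 * ε * digit t := by
  unfold relu digit
  rcases le_or_gt (1 / 2) t with h | h
  · rw [abs_of_nonneg (by linarith)] at ht
    rw [if_pos h, max_eq_right (by linarith), max_eq_right (by linarith)]
    push_cast; ring
  · rw [abs_of_neg (by linarith)] at ht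
    rw [if_neg (not_le.2 h), max_eq_left (by linarith), max_eq_left (by linarith)]
    push_cast; ring

section BitExtraction

variable (c : ℕ) (ε : ℝ)

/-- One step of bit extraction on the state `(t, y) ∈ ℝ × ℝ^c`. The hidden neurons are
`relu t`, `relu (t - 1/2 ± ε)` and `relu y`; the output is `(shift t, y)` with `digit t` written
into slot `k`. -/
def stage (k : ℕ) : Net (c + 1) (c + 1) :=
  .layer
    (vecCons (Pi.single 0 1) <| vecCons (Pi.single 0 1) <| vecCons (Pi.single 0 1) fun j : Fin c =>
      Pi.single j.succ 1)
    (vecCons 0 <| vecCons (ε - 1 / 2) <| vecCons (-ε - 1 / 2) 0)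
    (.last
      (vecCons (vecCons 2 <| vecCons (-1 / (2 * ε)) <| vecCons (1 / (2 * ε)) 0) fun j : Fin c =>
        if j.val = k then vecCons 0 (vecCons (1 / (2 * ε)) (vecCons (-1 / (2 * ε)) 0))
        else vecCons 0 (vecCons 0 (vecCons 0 (Pi.single j 1))))
      0)

theorem size_stage (k : ℕ) : (stage c ε k).size = 2 * c + 4 := by
  simp only [stage, Net.size]; omega

variable {c ε}

theorem eval_stage {k : ℕ} (hε : 0 < ε) {t : ℝ} (ht : 0 ≤ t) (hfar : ε ≤ |t - 1 / 2|)
    {y : Fin c → ℝ} (hy : 0 ≤ y) :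
    (stage c ε k).eval relu (vecCons t y) =
      vecCons (shift t) fun j => if j.val = k then (digit t : ℝ) else y j := by
  have hdigit :
      relu (t + (ε - 1 / 2)) / (2 * ε) - relu (t + (-ε - 1 / 2)) / (2 * ε) = digit t := by
    rw [← sub_div, relu_sub_relu_eq_digit hε.le hfar]
    field_simp
  simp only [one_div] at hdigit
  funext i
  refine Fin.cases ?_ (fun j => ?_) i
  · simp [stage, mulVec, dotProduct, Fin.sum_univ_succ, relu_of_nonneg ht, shift]
    linear_combination -hdigit
  · by_cases hj : j.val = k
    · simp [stage, hj, mulVec, dotProduct, Fin.sum_univ_succ]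
      linear_combination hdigit
    · simp [stage, hj, mulVec, dotProduct, Fin.sum_univ_succ, Pi.single_apply,
        (Fin.succ_ne_zero j).symm, relu_of_nonneg (hy j)]

variable (c ε) in
/-- `k` stages, extracting binary digits `k - 1, …, 0` into the slots of the same index, followed
by a read-out of the slots. -/
def bitChain : ℕ → Net (c + 1) c
  | 0 => .last (fun j => Pi.single j.succ 1) 0
  | k + 1 => (stage c ε k).comp (bitChain k)

variable (c ε) in
theorem size_bitChain (k : ℕ) : (bitChain c ε k).size = c + k * (2 * c + 4) := by
  induction k with
  | zero => simp [bitChain, Net.size]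
  | succ k ih => rw [bitChain, Net.size_comp, ih, size_stage]; ring

theorem eval_bitChain (hε : 0 < ε) (k : ℕ) {t : ℝ} (ht : t ∈ Set.Ico 0 1)
    (hfar : t ∉ dyadicNbhd k ε) {y : Fin c → ℝ} (hy : 0 ≤ y) (j : Fin c) :
    (bitChain c ε k).eval relu (vecCons t y) j =
      if j.val < k then (if (⌊2 ^ k * t⌋₊).testBit j then 1 else 0) else y j := by
  induction k generalizing t y with
  | zero => simp [bitChain, mulVec, dotProduct, Pi.single_apply]
  | succ k ih =>
    set y' : Fin c → ℝ := fun j => if j.val = k then (digit t : ℝ) else y j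
    have hy' : 0 ≤ y' := fun j => by
      simp only [y']; split_ifs
      · exact Nat.cast_nonneg _
      · exact hy j
    have hshift := shift_mem_Ico ht
    have hstate : (fun i => relu (vecCons (shift t) y' i)) = vecCons (shift t) y' := by
      funext i
      exact relu_of_nonneg (Fin.cases hshift.1 hy' i)
    rw [bitChain, Net.eval_comp,
      eval_stage hε ht.1 (le_abs_sub_half_of_notMem_dyadicNbhd hfar) hy, hstate,
      ih hshift (shift_notMem_dyadicNbhd hfar) hy', floor_two_pow_succ_mul ht,
      Nat.testBit_two_pow_mul_add _ (floor_two_pow_mul_lt hshift k)]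
    rcases lt_trichotomy j.val k with h | h | h
    · simp [h, Nat.lt_succ_of_lt h]
    · simp only [y', h, digit]
      split_ifs <;> simp_all
    · simp [y', h.ne', not_lt.2 h.le, not_le.2 h]

end BitExtraction

theorem mem_Ico_of_notMem_dyadicNbhd {k : ℕ} {ε t : ℝ} (hε : 0 < ε) (ht : t ∈ Set.Icc 0 1)
    (hfar : t ∉ dyadicNbhd k ε) : t ∈ Set.Ico 0 1 := by
  refine ⟨ht.1, ht.2.lt_of_ne fun h => hfar (mem_dyadicNbhd.2 ⟨2 ^ k, le_rfl, ?_⟩)⟩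
  simpa [h] using hε

theorem bitRep_eq {c : ℕ} {t : ℝ} (ht : t ∈ Set.Ico 0 1) (j : Fin c) :
    bitRep c t j = if (⌊2 ^ c * t⌋₊).testBit j then 1 else 0 := by
  rw [bitRep, Int.floor_toNat, min_eq_left (Nat.le_sub_one_of_lt (floor_two_pow_mul_lt ht c))]

def inputEmbed (c d : ℕ) : Fin ((c + 1) * d) → Fin d → ℝ :=
  fun p i => if finProdFinEquiv.symm p = (0, i) then 1 else 0

theorem relu_inputEmbed_mulVec {c d : ℕ} {x : Fin d → ℝ} (hx : 0 ≤ x) (i : Fin d) :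
    (fun k => relu ((inputEmbed c d *ᵥ x) (finProdFinEquiv (k, i)))) = vecCons (x i) 0 := by
  funext k
  refine Fin.cases ?_ (fun k => ?_) k
  · simp [inputEmbed, mulVec, dotProduct, relu_of_nonneg (hx i)]
  · simp [inputEmbed, mulVec, dotProduct, relu]

def bitNet (c d : ℕ) (ε : ℝ) : Net d (c * d) :=
  .layer (inputEmbed c d) 0 ((bitChain c ε c).replicate d)

theorem eval_bitNet {c d : ℕ} {ε : ℝ} (hε : 0 < ε) {x : Fin d → ℝ}
    (hx : ∀ i, x i ∈ Set.Icc 0 1 ∧ x i ∉ dyadicNbhd c ε) :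
    (bitNet c d ε).eval relu x = binc c d x := by
  funext p
  obtain ⟨⟨j, i⟩, rfl⟩ := finProdFinEquiv.surjective p
  have hti := mem_Ico_of_notMem_dyadicNbhd hε (hx i).1 (hx i).2
  simp only [bitNet, Net.eval_layer, Net.eval_replicate, Pi.zero_apply, add_zero]
  rw [relu_inputEmbed_mulVec (fun i => (hx i).1.1),
    eval_bitChain hε c hti (hx i).2 le_rfl j, if_pos j.isLt]
  simp [binc, bitRep_eq hti]

theorem size_bitNet (c d : ℕ) (ε : ℝ) :
    (bitNet c d ε).size = (2 * c ^ 2 + 6 * c + 1) * d := by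
  simp only [bitNet, Net.size, Net.size_replicate, size_bitChain]
  ring

theorem size_bitNet_le {c : ℕ} (hc : 1 ≤ c) (d : ℕ) (ε : ℝ) :
    ((bitNet c d ε).size : ℝ) ≤ 9 * d * c ^ 2 := by
  have hc' : (1 : ℝ) ≤ c := by exact_mod_cast hc
  rw [size_bitNet]
  push_cast
  nlinarith [mul_nonneg (d.cast_nonneg : (0 : ℝ) ≤ d)
    (mul_nonneg (by linarith : (0 : ℝ) ≤ 7 * c + 1) (sub_nonneg.2 hc'))]

theorem volume_dyadicNbhd_le (k : ℕ) (ε : ℝ) :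
    volume (dyadicNbhd k ε) ≤ ENNReal.ofReal ((2 ^ k + 1) * (2 * ε)) := by
  calc volume (dyadicNbhd k ε)
      ≤ ∑ ℓ ∈ Finset.range (2 ^ k + 1), volume (Metric.ball ((ℓ : ℝ) / 2 ^ k) ε) :=
        measure_biUnion_finset_le _ _
    _ = ENNReal.ofReal ((2 ^ k + 1) * (2 * ε)) := by
        have h : ((2 ^ k + 1 : ℕ) : ℝ) = 2 ^ k + 1 := by push_cast; rfl
        simp only [Real.volume_ball, Finset.sum_const, Finset.card_range, nsmul_eq_mul]
        rw [← h, ENNReal.ofReal_mul (Nat.cast_nonneg _), ENNReal.ofReal_natCast]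

theorem measurableSet_dyadicNbhd (k : ℕ) (ε : ℝ) : MeasurableSet (dyadicNbhd k ε) :=
  Finset.measurableSet_biUnion _ fun _ _ => measurableSet_ball

theorem measure_exists_coord_mem_le {d : ℕ} {μ : Measure (Fin d → ℝ)} {M : ℝ}
    (hmarg : ∀ i : Fin d, ∀ s : Set ℝ, MeasurableSet s →
      μ.map (fun x => x i) s ≤ ENNReal.ofReal M * volume s)
    {s : Set ℝ} (hs : MeasurableSet s) {V : ℝ} (hV : volume s ≤ ENNReal.ofReal V)
    (hV0 : 0 ≤ V) :
    μ {x | ∃ i, x i ∈ s} ≤ ENNReal.ofReal (d * (M * V)) := by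
  have hcoord : ∀ i : Fin d, μ {x | x i ∈ s} ≤ ENNReal.ofReal (M * V) := fun i => by
    rw [ENNReal.ofReal_mul' hV0]
    calc μ {x | x i ∈ s} = μ.map (fun x => x i) s :=
          (Measure.map_apply (measurable_pi_apply i) hs).symm
      _ ≤ ENNReal.ofReal M * volume s := hmarg i s hs
      _ ≤ ENNReal.ofReal M * ENNReal.ofReal V := by gcongr
  calc μ {x | ∃ i, x i ∈ s} = μ (⋃ i, {x | x i ∈ s}) := by rw [Set.ofPred_exists]
    _ ≤ ∑ i, μ {x | x i ∈ s} := measure_iUnion_fintype_le μ _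
    _ ≤ ∑ _i : Fin d, ENNReal.ofReal (M * V) := Finset.sum_le_sum fun i _ => hcoord i
    _ = ENNReal.ofReal (d * (M * V)) := by
        rw [Finset.sum_const, Finset.card_univ, Fintype.card_fin, nsmul_eq_mul,
          ENNReal.ofReal_mul (Nat.cast_nonneg d), ENNReal.ofReal_natCast]

theorem ofReal_one_sub_le_measure {α : Type*} [MeasurableSpace α] {μ : Measure α}
    [IsProbabilityMeasure μ] {s : Set α} {δ : ℝ} (hδ : 0 ≤ δ)
    (hs : μ sᶜ ≤ ENNReal.ofReal δ) : ENNReal.ofReal (1 - δ) ≤ μ s := by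
  rw [ENNReal.ofReal_sub _ hδ, ENNReal.ofReal_one, tsub_le_iff_right]
  calc 1 = μ Set.univ := measure_univ.symm
    _ ≤ μ s + μ sᶜ := measure_univ_le_add_compl s
    _ ≤ μ s + ENNReal.ofReal δ := by gcongr

theorem measurableSet_cube (d : ℕ) :
    MeasurableSet {x : Fin d → ℝ | ∀ i, x i ∈ Set.Icc (0 : ℝ) 1} := by
  measurability

theorem measure_compl_bitNet_correct_le {c d : ℕ} {ε M : ℝ} (hε : 0 < ε)
    {μ : Measure (Fin d → ℝ)} [IsProbabilityMeasure μ]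
    (hcube : μ {x | ∀ i, x i ∈ Set.Icc (0 : ℝ) 1} = 1)
    (hmarg : ∀ i : Fin d, ∀ s : Set ℝ, MeasurableSet s →
      μ.map (fun x => x i) s ≤ ENNReal.ofReal M * volume s) :
    μ {x | ∀ p, (bitNet c d ε).eval relu x p = binc c d x p}ᶜ ≤
      ENNReal.ofReal (d * (M * ((2 ^ c + 1) * (2 * ε)))) := by
  have hbad : {x | ∀ p, (bitNet c d ε).eval relu x p = binc c d x p}ᶜ ⊆
      {x | ∀ i, x i ∈ Set.Icc (0 : ℝ) 1}ᶜ ∪ {x | ∃ i, x i ∈ dyadicNbhd c ε} := by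
    intro x hx
    by_contra h
    simp only [Set.mem_union, Set.mem_compl_iff, Set.mem_ofPred_eq, not_or, not_not,
      not_exists] at h
    exact hx (congrFun (eval_bitNet hε fun i => ⟨h.1 i, h.2 i⟩))
  calc _ ≤ μ {x | ∀ i, x i ∈ Set.Icc (0 : ℝ) 1}ᶜ +
        μ {x | ∃ i, x i ∈ dyadicNbhd c ε} :=
        (measure_mono hbad).trans (measure_union_le _ _)
    _ ≤ ENNReal.ofReal (d * (M * ((2 ^ c + 1) * (2 * ε)))) := by
        rw [(prob_compl_eq_zero_iff (measurableSet_cube d)).2 hcube, zero_add]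
        exact measure_exists_coord_mem_le hmarg (measurableSet_dyadicNbhd c ε)
          (volume_dyadicNbhd_le c ε) (by positivity)

/-- there is a universal constant `C` such that the following holds. Let
`μ` be a probability distribution on `[0,1]^d` whose one-dimensional marginals have
densities bounded by `M`. For every `c ≥ 1` and every `δ > 0` there exists a ReLU
network `N : ℝ^d → ℝ^{c·d}` of size at most `C·d·c²` such that
`Pr_{x∼μ}[N(x) = bin_c(x)] ≥ 1 − δ`. -/
theorem binary_extraction_size_dc_sq :
    ∃ C : ℝ, 0 < C ∧
      ∀ (d : ℕ) (M : ℝ) (μ : Measure (Fin d → ℝ)),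
        IsProbabilityMeasure μ →
        μ {x | ∀ i, x i ∈ Set.Icc (0:ℝ) 1} = 1 →
        (∀ i : Fin d, ∀ s : Set ℝ, MeasurableSet s →
          μ.map (fun x => x i) s ≤ ENNReal.ofReal M * volume s) →
        ∀ (c : ℕ), 1 ≤ c → ∀ δ : ℝ, 0 < δ →
          ∃ N : Net d (c * d), (N.size : ℝ) ≤ C * d * c ^ 2 ∧
            ENNReal.ofReal (1 - δ) ≤ μ {x | ∀ p, N.eval relu x p = binc c d x p} := by
  refine ⟨9, by norm_num, fun d M μ _ hcube hmarg c hc δ hδ => ?_⟩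
  obtain ⟨ε, hε, hεδ⟩ := exists_pos_mul_lt hδ (2 * d * M * (2 ^ c + 1))
  refine ⟨bitNet c d ε, size_bitNet_le hc d ε, ofReal_one_sub_le_measure hδ.le ?_⟩
  calc _ ≤ ENNReal.ofReal (d * (M * ((2 ^ c + 1) * (2 * ε)))) :=
        measure_compl_bitNet_correct_le hε hcube hmarg
    _ ≤ ENNReal.ofReal δ := ENNReal.ofReal_le_ofReal (by linarith)
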